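/- Let H be a k-uniform hypergraph with signless Laplacian Q(H). Then min over vertices u of sqrt(2d_u² + (2/(k-1))·Σ_{v∼u} d_uv·d_v) ≤ q_max(H) ≤ max over vertices u of sqrt(2d_u² + (2/(k-1))·Σ_{v∼u} d_uv·d_v). -/

import Mathlib

open Finset

/-- The set of hyperedges containing both `i` and `j`. -/
def edgesBetween {n : ℕ} (E : Finset (Finset (Fin n))) (i j : Fin n) :
    Finset (Finset (Fin n)) :=
  E.filter fun e => i ∈ e ∧ j ∈ e

/-- The degree of vertex `i`: the number of hyperedges containing `i`. -/
def hdeg {n : ℕ} (E : Finset (Finset (Fin n))) (i : Fin n) : ℕ :=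
  (E.filter fun e => i ∈ e).card

/-- Two (distinct) vertices are adjacent if some hyperedge contains both. -/
def Adj {n : ℕ} (E : Finset (Finset (Fin n))) (i j : Fin n) : Prop :=
  i ≠ j ∧ ∃ e ∈ E, i ∈ e ∧ j ∈ e

/-- The neighbours of a vertex. -/
noncomputable def neighbors {n : ℕ} (E : Finset (Finset (Fin n))) (i : Fin n) :
    Finset (Fin n) :=
  @Finset.filter _ (fun j => Adj E i j) (Classical.decPred _) Finset.univ

/-- Banerjee's adjacency matrix of a hypergraph: `A i j = ∑_{e ∋ i,j} 1/(|e|-1)`. -/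
noncomputable def adjMat {n : ℕ} (E : Finset (Finset (Fin n))) :
    Matrix (Fin n) (Fin n) ℝ :=
  Matrix.of fun i j =>
    if i = j then 0 else ∑ e ∈ edgesBetween E i j, 1 / ((e.card : ℝ) - 1)

/-- The signless Laplacian matrix `Q = D + A`. -/
noncomputable def signlessLap {n : ℕ} (E : Finset (Finset (Fin n))) :
    Matrix (Fin n) (Fin n) ℝ :=
  Matrix.diagonal (fun i => (hdeg E i : ℝ)) + adjMat E

/-- Largest eigenvalue of a real matrix. -/
noncomputable def qmax {n : ℕ} (M : Matrix (Fin n) (Fin n) ℝ) : ℝ :=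
  sSup (spectrum ℝ M)

/-- Smallest eigenvalue of a real matrix. -/
noncomputable def qmin {n : ℕ} (M : Matrix (Fin n) (Fin n) ℝ) : ℝ :=
  sInf (spectrum ℝ M)

/-- A hypergraph is `k`-uniform if every hyperedge has exactly `k` vertices. -/
def IsUniform {n : ℕ} (k : ℕ) (E : Finset (Finset (Fin n))) : Prop :=
  ∀ e ∈ E, e.card = k

/-- A hypergraph is connected if any two vertices are joined by a walk. -/
def Conn {n : ℕ} (E : Finset (Finset (Fin n))) : Prop :=
  ∀ i j : Fin n, Relation.ReflTransGen (Adj E) i j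

/-!
Since `Q` has row sums `2 d_u`, the `u`-th row sum of `Q²` is `∑_l Q_ul · 2 d_l`, which is the
quantity under the square root. Gershgorin's theorem, applied to the nonnegative matrix `Q²` and
an eigenvector of `Q`, bounds the square of every eigenvalue of `Q` by some row sum of `Q²`.
Conversely, `Q` is diagonally dominant, so its spectrum lies in `[0, q_max]` and that of `Q²` in
`[0, q_max²]`; hence `q_max² I - Q²` is positive semidefinite, and testing it against the all-ones
vector shows that the average row sum of `Q²`, a fortiori the smallest one, is at most `q_max²`.
-/

namespace Matrix

variable {ι : Type*} [Fintype ι] [DecidableEq ι] {A : Matrix ι ι ℝ} {μ : ℝ}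

theorem exists_le_sum_row_of_mem_spectrum (hA : ∀ i j, 0 ≤ A i j) (hμ : μ ∈ spectrum ℝ A) :
    ∃ u, μ ≤ ∑ j, A u j := by
  rw [← spectrum_toLin', ← Module.End.hasEigenvalue_iff_mem_spectrum] at hμ
  obtain ⟨u, hu⟩ := eigenvalue_mem_ball hμ
  rw [Metric.mem_closedBall, Real.dist_eq] at hu
  simp only [Real.norm_eq_abs, abs_of_nonneg (hA u _)] at hu
  refine ⟨u, ?_⟩
  rw [← add_sum_erase _ _ (mem_univ u)]
  linarith [le_abs_self (μ - A u u)]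

theorem nonneg_of_mem_spectrum_of_diagDominant (hA : ∀ i, ∑ j ∈ univ.erase i, |A i j| ≤ A i i)
    (hμ : μ ∈ spectrum ℝ A) : 0 ≤ μ := by
  rw [← spectrum_toLin', ← Module.End.hasEigenvalue_iff_mem_spectrum] at hμ
  obtain ⟨u, hu⟩ := eigenvalue_mem_ball hμ
  rw [Metric.mem_closedBall, Real.dist_eq] at hu
  simp only [Real.norm_eq_abs] at hu
  linarith [neg_abs_le (μ - A u u), hA u]

theorem IsHermitian.exists_sum_row_le [Nonempty ι] (hA : A.IsHermitian) {c : ℝ}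
    (hc : ∀ μ ∈ spectrum ℝ A, μ ≤ c) : ∃ u, ∑ j, A u j ≤ c := by
  have hpsd : (algebraMap ℝ _ c - A).PosSemidef := by
    refine posSemidef_iff_isHermitian_and_spectrum_nonneg.mpr ⟨(isHermitian_diagonal _).sub hA, ?_⟩
    rw [← spectrum.singleton_sub_eq]
    rintro _ ⟨_, rfl, μ, hμ, rfl⟩
    simpa using hc μ hμ
  have hsum : ∑ u, ∑ j, A u j ≤ ∑ _u : ι, c := by
    simpa [dotProduct, mulVec, algebraMap_matrix_apply, sum_sub_distrib]
      using hpsd.re_dotProduct_nonneg 1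
  obtain ⟨u, -, hu⟩ := exists_le_of_sum_le univ_nonempty hsum
  exact ⟨u, hu⟩

theorem IsHermitian.spectrum_sq (hA : A.IsHermitian) :
    spectrum ℝ (A ^ 2) = (· ^ 2) '' spectrum ℝ A := by
  -- passing `hA` unannotated would make `IsHermitian` the predicate of the functional calculus
  rw [← cfc_pow_id (R := ℝ) A 2 (show IsSelfAdjoint A from hA),
    cfc_map_spectrum (fun x : ℝ => x ^ 2) A]

theorem sSup_spectrum_le_iSup_sqrt_sum_row_sq (hA : ∀ i j, 0 ≤ A i j) :
    sSup (spectrum ℝ A) ≤ ⨆ u, √(∑ j, (A ^ 2) u j) := by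
  have hA2 : ∀ i j, 0 ≤ (A ^ 2) i j := fun i j => by
    rw [sq, mul_apply]; exact sum_nonneg fun l _ => mul_nonneg (hA i l) (hA l j)
  refine Real.sSup_le (fun μ hμ => ?_) (Real.iSup_nonneg fun _ => Real.sqrt_nonneg _)
  obtain ⟨u, hu⟩ := exists_le_sum_row_of_mem_spectrum hA2 (spectrum.pow_mem_pow A 2 hμ)
  exact le_ciSup_of_le (Set.finite_range _).bddAbove u
    ((le_abs_self μ).trans (Real.abs_le_sqrt hu))

theorem IsHermitian.iInf_sqrt_sum_row_sq_le_sSup_spectrum [Nonempty ι] (hA : A.IsHermitian)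
    (hspec : ∀ μ ∈ spectrum ℝ A, 0 ≤ μ) :
    ⨅ u, √(∑ j, (A ^ 2) u j) ≤ sSup (spectrum ℝ A) := by
  have hle : ∀ μ ∈ spectrum ℝ A, μ ≤ sSup (spectrum ℝ A) :=
    fun μ hμ => le_csSup A.finite_real_spectrum.bddAbove hμ
  obtain ⟨u, hu⟩ := (hA.pow 2).exists_sum_row_le (c := sSup (spectrum ℝ A) ^ 2) <| by
    rw [hA.spectrum_sq]
    rintro _ ⟨μ, hμ, rfl⟩
    exact pow_le_pow_left₀ (hspec μ hμ) (hle μ hμ) 2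
  exact ciInf_le_of_le ⟨0, Set.forall_mem_range.mpr fun _ => Real.sqrt_nonneg _⟩ u
    ((Real.sqrt_le_left (Real.sSup_nonneg hspec)).mpr hu)

end Matrix

section SignlessLaplacian

variable {n k : ℕ} {E : Finset (Finset (Fin n))}

theorem mem_edgesBetween {i j : Fin n} {e : Finset (Fin n)} :
    e ∈ edgesBetween E i j ↔ e ∈ E ∧ i ∈ e ∧ j ∈ e :=
  mem_filter

theorem edgesBetween_comm (i j : Fin n) : edgesBetween E i j = edgesBetween E j i := by
  simp only [edgesBetween, and_comm]

theorem mem_neighbors {u v : Fin n} :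
    v ∈ neighbors E u ↔ u ≠ v ∧ (edgesBetween E u v).Nonempty := by
  classical
  rw [neighbors, Finset.mem_filter]
  simp only [mem_univ, true_and, Adj, Finset.Nonempty, mem_edgesBetween]

theorem signlessLap_apply_self (i : Fin n) : signlessLap E i i = hdeg E i := by
  simp [signlessLap, adjMat]

theorem signlessLap_apply_of_ne {i j : Fin n} (h : i ≠ j) :
    signlessLap E i j = ∑ e ∈ edgesBetween E i j, 1 / ((e.card : ℝ) - 1) := by
  simp [signlessLap, adjMat, h]

theorem signlessLap_apply_of_ne_of_isUniform (hU : IsUniform k E) {i j : Fin n} (h : i ≠ j) :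
    signlessLap E i j = (edgesBetween E i j).card / ((k : ℝ) - 1) := by
  rw [signlessLap_apply_of_ne h, sum_congr rfl fun e he => by rw [hU e (mem_edgesBetween.1 he).1],
    sum_const, nsmul_eq_mul, mul_one_div]

theorem signlessLap_isHermitian : (signlessLap E).IsHermitian := by
  ext i j
  rcases eq_or_ne i j with rfl | h
  · rfl
  · simp [signlessLap_apply_of_ne h, signlessLap_apply_of_ne h.symm, edgesBetween_comm]

theorem signlessLap_nonneg (i j : Fin n) : 0 ≤ signlessLap E i j := by
  rcases eq_or_ne i j with rfl | h
  · rw [signlessLap_apply_self]; positivity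
  · rw [signlessLap_apply_of_ne h]
    refine sum_nonneg fun e he => ?_
    obtain ⟨-, hi, hj⟩ := mem_edgesBetween.1 he
    have : (1 : ℝ) < e.card := by exact_mod_cast one_lt_card.2 ⟨i, hi, j, hj, h⟩
    exact div_nonneg zero_le_one (by linarith)

theorem sum_card_edgesBetween_erase (hU : IsUniform k E) (u : Fin n) :
    ∑ v ∈ univ.erase u, (edgesBetween E u v).card = (k - 1) * hdeg E u := by
  have hcount := sum_card_bipartiteAbove_eq_sum_card_bipartiteBelow (s := univ.erase u)
    (t := E.filter (u ∈ ·)) (r := fun v e => v ∈ e)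
  have hbelow : ∀ e ∈ E.filter (u ∈ ·), ((univ.erase u).bipartiteBelow (· ∈ ·) e).card = k - 1 := by
    intro e he
    obtain ⟨heE, hue⟩ := mem_filter.1 he
    rw [← hU e heE, ← card_erase_of_mem hue]
    congr 1
    ext v
    simp [bipartiteBelow, and_comm]
  rw [sum_congr rfl hbelow, sum_const, smul_eq_mul, mul_comm] at hcount
  rw [hdeg, ← hcount]
  refine sum_congr rfl fun v _ => ?_
  simp [bipartiteAbove, edgesBetween, filter_filter]

theorem sum_signlessLap_erase (hU : IsUniform k E) (hk : 2 ≤ k) (u : Fin n) :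
    ∑ v ∈ univ.erase u, signlessLap E u v = hdeg E u := by
  have hk1 : (k : ℝ) - 1 ≠ 0 := by
    have : (2 : ℝ) ≤ k := by exact_mod_cast hk
    linarith
  rw [sum_congr rfl fun v hv => signlessLap_apply_of_ne_of_isUniform hU (ne_of_mem_erase hv).symm,
    ← sum_div, ← Nat.cast_sum, sum_card_edgesBetween_erase hU, Nat.cast_mul,
    Nat.cast_pred (by omega), mul_div_cancel_left₀ _ hk1]

theorem sum_signlessLap (hU : IsUniform k E) (hk : 2 ≤ k) (u : Fin n) :
    ∑ v, signlessLap E u v = 2 * hdeg E u := by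
  rw [← add_sum_erase _ _ (mem_univ u), signlessLap_apply_self, sum_signlessLap_erase hU hk]
  ring

theorem sum_signlessLap_sq (hU : IsUniform k E) (hk : 2 ≤ k) (u : Fin n) :
    ∑ v, (signlessLap E ^ 2) u v = 2 * (hdeg E u : ℝ) ^ 2 + 2 / ((k : ℝ) - 1) *
      ∑ v ∈ neighbors E u, ((edgesBetween E u v).card : ℝ) * (hdeg E v : ℝ) := by
  have hrow : ∑ v, (signlessLap E ^ 2) u v = ∑ l, signlessLap E u l * (2 * hdeg E l) := by
    simp only [sq, Matrix.mul_apply]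
    rw [sum_comm]
    simp only [← mul_sum, sum_signlessLap hU hk]
  have hsupp : neighbors E u ⊆ univ.erase u := fun v hv =>
    mem_erase.2 ⟨(mem_neighbors.1 hv).1.symm, mem_univ v⟩
  have hzero : ∀ v ∈ univ.erase u, v ∉ neighbors E u →
      signlessLap E u v * (2 * hdeg E v) = 0 := by
    intro v hv hvn
    have huv : u ≠ v := (ne_of_mem_erase hv).symm
    rw [mem_neighbors, not_and, not_nonempty_iff_eq_empty] at hvn
    simp [signlessLap_apply_of_ne_of_isUniform hU huv, hvn huv]
  rw [hrow, ← add_sum_erase _ _ (mem_univ u), signlessLap_apply_self, ← sum_subset hsupp hzero,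
    mul_sum]
  congr 1
  · ring
  · refine sum_congr rfl fun v hv => ?_
    rw [signlessLap_apply_of_ne_of_isUniform hU (mem_neighbors.1 hv).1]
    ring

theorem nonneg_of_mem_spectrum_signlessLap (hU : IsUniform k E) (hk : 2 ≤ k) {μ : ℝ}
    (hμ : μ ∈ spectrum ℝ (signlessLap E)) : 0 ≤ μ := by
  refine Matrix.nonneg_of_mem_spectrum_of_diagDominant (fun i => ?_) hμ
  simp only [abs_of_nonneg (signlessLap_nonneg _ _), sum_signlessLap_erase hU hk,
    signlessLap_apply_self, le_refl]

end SignlessLaplacian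

theorem stmt_7_general (n k : ℕ) (hn : 0 < n) (hk : 2 ≤ k) (E : Finset (Finset (Fin n)))
    (hU : IsUniform k E) :
    (⨅ u : Fin n, Real.sqrt (2 * (hdeg E u : ℝ) ^ 2 +
        2 / ((k : ℝ) - 1) *
          ∑ v ∈ neighbors E u, ((edgesBetween E u v).card : ℝ) * (hdeg E v : ℝ)))
      ≤ qmax (signlessLap E) ∧
    qmax (signlessLap E) ≤
      ⨆ u : Fin n, Real.sqrt (2 * (hdeg E u : ℝ) ^ 2 +
        2 / ((k : ℝ) - 1) *
          ∑ v ∈ neighbors E u, ((edgesBetween E u v).card : ℝ) * (hdeg E v : ℝ)) := by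
  have : Nonempty (Fin n) := ⟨⟨0, hn⟩⟩
  simp only [← sum_signlessLap_sq hU hk]
  exact ⟨signlessLap_isHermitian.iInf_sqrt_sum_row_sq_le_sSup_spectrum
      fun μ => nonneg_of_mem_spectrum_signlessLap hU hk,
    Matrix.sSup_spectrum_le_iSup_sqrt_sum_row_sq signlessLap_nonneg⟩

theorem stmt_7 (n k : ℕ) (hn : 0 < n) (hk : 2 ≤ k) (E : Finset (Finset (Fin n)))
    (hU : IsUniform k E) (hc : Conn E) :
    (⨅ u : Fin n, Real.sqrt (2 * (hdeg E u : ℝ) ^ 2 +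
        2 / ((k : ℝ) - 1) *
          ∑ v ∈ neighbors E u, ((edgesBetween E u v).card : ℝ) * (hdeg E v : ℝ)))
      ≤ qmax (signlessLap E) ∧
    qmax (signlessLap E) ≤
      ⨆ u : Fin n, Real.sqrt (2 * (hdeg E u : ℝ) ^ 2 +
        2 / ((k : ℝ) - 1) *
          ∑ v ∈ neighbors E u, ((edgesBetween E u v).card : ℝ) * (hdeg E v : ℝ)) :=
  stmt_7_general n k hn hk E hU
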